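/- arXiv:1805.02601 — 4 statements merged into one kernel-verified Lean document; each statement's English description precedes it below -/
import Mathlib

section
/- Let f ∈ C^s(T²) with s ≥ 2 and mean value 0, and let γ(t) = (at, bt + c) be a closed geodesic with gcd(a,b) = 1, a ≠ 0, b ≠ 0, |a| ≥ |b|. Then |(1/|γ|)∫_γ f dH¹| ≤ C_s · (max_{|α|=s}‖∂_α f‖_{L¹(T²)}) / |γ|^s, where |γ| = √(a²+b²). -/
open MeasureTheory

/-- A function on `ℝ²` that is `ℤ²`-periodic, i.e. a function on the torus `T²`. -/
def Periodic2 (f : ℝ × ℝ → ℂ) : Prop :=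
  ∀ x y : ℝ, f (x + 1, y) = f (x, y) ∧ f (x, y + 1) = f (x, y)

/-- The Fourier coefficient `f̂(k) = ∫_{[0,1]²} f(x,y) e^{-2πi(k₁x + k₂y)}`. -/
noncomputable def fc (f : ℝ × ℝ → ℂ) (k : ℤ × ℤ) : ℂ :=
  ∫ x in (0:ℝ)..1, ∫ y in (0:ℝ)..1,
    f (x, y) * Complex.exp (-2 * (Real.pi : ℂ) * Complex.I * ((k.1 : ℂ) * x + (k.2 : ℂ) * y))

/-- The average of `f` over the closed geodesic `γ(t) = (a t, b t + c)`, `t ∈ [0,1]`: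
`(1/|γ|) ∫_γ f dH¹ = ∫₀¹ f(γ(t)) dt`. -/
noncomputable def geodAvg (f : ℝ × ℝ → ℂ) (a b : ℤ) (c : ℝ) : ℂ :=
  ∫ t in (0:ℝ)..1, f ((a : ℝ) * t, (b : ℝ) * t + c)

/-- The average of `f` over the general closed geodesic `γ(t) = p + t (a,b)`, `t ∈ [0,1]`. -/
noncomputable def geodAvgP (f : ℝ × ℝ → ℂ) (a b : ℤ) (p : ℝ × ℝ) : ℂ :=
  ∫ t in (0:ℝ)..1, f (p.1 + (a : ℝ) * t, p.2 + (b : ℝ) * t)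

/-- The squared `L²(T²)` norm of `f`. -/
noncomputable def L2sq (f : ℝ × ℝ → ℂ) : ℝ :=
  ∫ x in (0:ℝ)..1, ∫ y in (0:ℝ)..1, ‖f (x, y)‖ ^ 2

/-- The `L¹(T²)` norm of `f`. -/
noncomputable def L1norm (f : ℝ × ℝ → ℂ) : ℝ :=
  ∫ x in (0:ℝ)..1, ∫ y in (0:ℝ)..1, ‖f (x, y)‖

/-- Partial derivative in the first variable. -/
noncomputable def pd1 (f : ℝ × ℝ → ℂ) : ℝ × ℝ → ℂ :=
  fun v => deriv (fun x => f (x, v.2)) v.1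

/-- Partial derivative in the second variable. -/
noncomputable def pd2 (f : ℝ × ℝ → ℂ) : ℝ × ℝ → ℂ :=
  fun v => deriv (fun y => f (v.1, y)) v.2

/-- The mixed partial derivative `∂_α f` for the multi-index `α = (α₁, α₂)`. -/
noncomputable def pdMix (a1 a2 : ℕ) (f : ℝ × ℝ → ℂ) : ℝ × ℝ → ℂ :=
  pd1^[a1] (pd2^[a2] f)

/-- The squared `L²(T²)` norm of `∇f`. -/
noncomputable def gradL2sq (f : ℝ × ℝ → ℂ) : ℝ :=
  ∫ x in (0:ℝ)..1, ∫ y in (0:ℝ)..1, (‖pd1 f (x, y)‖ ^ 2 + ‖pd2 f (x, y)‖ ^ 2)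

/-!
Write `g_j(c)` for the average of `∂_y^j f` over the line `t ↦ (a t, b t + c)`, `t ∈ [0, 1]`.
Since `gcd(a, b) = 1`, shifting `c` by `1/a` only reparametrises the closed geodesic, so every
`g_j` is `1/|a|`-periodic. Averaging `g_0` over `c` recovers the mean of `f`, so `g_0` has mean
zero, and `g_{j+1} = g_j'` has mean zero as the derivative of a periodic function. A mean-zero
periodic function is bounded by the `L¹` norm of its derivative over one period; iterating gives
`|g_0(c)| ≤ |a|^{1-s} ∫_0^{1/|a|} |g_s| ≤ |a|^{-s} ‖∂_y^s f‖_{L¹}`, and `|a|⁻¹ ≤ √2 / |γ|`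
because `|b| ≤ |a|`.
-/

open Function

section Poincare
variable {E : Type*} [NormedAddCommGroup E] [NormedSpace ℝ E] [CompleteSpace E]
  {g g' : ℝ → E} {T : ℝ}

theorem Function.Periodic.norm_sub_le_integral_norm_deriv (hT : 0 < T) (hg : Periodic g T)
    (hg' : Periodic g' T) (hderiv : ∀ x, HasDerivAt g (g' x) x) (hcont : Continuous g')
    (x y : ℝ) : ‖g y - g x‖ ≤ ∫ t in (0:ℝ)..T, ‖g' t‖ := by
  have hgy : g y = g (toIcoMod hT x y) := by
    rw [← self_sub_toIcoDiv_zsmul hT x y, hg.sub_zsmul_eq]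
  set y' := toIcoMod hT x y
  have hy' : y' ∈ Set.Ico x (x + T) := toIcoMod_mem_Ico hT x y
  calc ‖g y - g x‖ = ‖∫ t in x..y', g' t‖ := by
        rw [hgy, intervalIntegral.integral_eq_sub_of_hasDerivAt (fun t _ => hderiv t)
          (hcont.intervalIntegrable _ _)]
    _ ≤ ∫ t in x..y', ‖g' t‖ := intervalIntegral.norm_integral_le_integral_norm hy'.1
    _ ≤ ∫ t in x..x + T, ‖g' t‖ :=
        intervalIntegral.integral_mono_interval le_rfl hy'.1 hy'.2.le
          (Filter.Eventually.of_forall fun _ => norm_nonneg _) (hcont.norm.intervalIntegrable _ _)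
    _ = ∫ t in (0:ℝ)..T, ‖g' t‖ := by
        simpa using (hg'.comp (‖·‖)).intervalIntegral_add_eq x 0

theorem Function.Periodic.norm_le_integral_norm_deriv (hT : 0 < T) (hg : Periodic g T)
    (hg' : Periodic g' T) (hderiv : ∀ x, HasDerivAt g (g' x) x) (hcont : Continuous g')
    (hmean : ∫ x in (0:ℝ)..T, g x = 0) (y : ℝ) :
    ‖g y‖ ≤ ∫ t in (0:ℝ)..T, ‖g' t‖ := by
  have hgc : Continuous g := continuous_iff_continuousAt.2 fun x => (hderiv x).continuousAt
  have hmul : T • g y = ∫ x in (0:ℝ)..T, (g y - g x) := by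
    rw [intervalIntegral.integral_sub intervalIntegrable_const (hgc.intervalIntegrable _ _), hmean,
      sub_zero, intervalIntegral.integral_const, sub_zero]
  have := intervalIntegral.norm_integral_le_of_norm_le_const (a := 0) (b := T)
    fun x _ => hg.norm_sub_le_integral_norm_deriv hT hg' hderiv hcont x y
  rw [← hmul, norm_smul, Real.norm_of_nonneg hT.le, sub_zero, abs_of_pos hT, mul_comm] at this
  exact le_of_mul_le_mul_right this hT

theorem Function.Periodic.integral_deriv_eq_zero (hg : Periodic g T)
    (hderiv : ∀ x, HasDerivAt g (g' x) x) (hcont : Continuous g') :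
    ∫ x in (0:ℝ)..T, g' x = 0 := by
  rw [intervalIntegral.integral_eq_sub_of_hasDerivAt (fun x _ => hderiv x)
    (hcont.intervalIntegrable _ _), hg.eq, sub_self]

theorem norm_le_pow_mul_integral_norm_of_periodic {g : ℕ → ℝ → E} (hT : 0 < T)
    (hper : ∀ j, Periodic (g j) T) (n : ℕ)
    (hderiv : ∀ j ≤ n, ∀ x, HasDerivAt (g j) (g (j + 1) x) x) (hcont : Continuous (g (n + 1)))
    (hmean : ∫ x in (0:ℝ)..T, g 0 x = 0) (y : ℝ) :
    ‖g 0 y‖ ≤ T ^ n * ∫ x in (0:ℝ)..T, ‖g (n + 1) x‖ := by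
  induction n with
  | zero =>
    simpa using (hper 0).norm_le_integral_norm_deriv hT (hper 1) (hderiv 0 le_rfl) hcont hmean y
  | succ n ih =>
    have hderiv' : ∀ x, HasDerivAt (g (n + 1)) (g (n + 2) x) x := hderiv (n + 1) le_rfl
    have hcont' : Continuous (g (n + 1)) :=
      continuous_iff_continuousAt.2 fun x => (hderiv' x).continuousAt
    have hmean' : ∫ x in (0:ℝ)..T, g (n + 1) x = 0 :=
      (hper n).integral_deriv_eq_zero (hderiv n (by omega)) hcont'
    have hstep : ∫ x in (0:ℝ)..T, ‖g (n + 1) x‖ ≤ T * ∫ x in (0:ℝ)..T, ‖g (n + 2) x‖ := by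
      simpa using intervalIntegral.integral_mono_on (μ := volume) hT.le
        (hcont'.norm.intervalIntegrable _ _) intervalIntegrable_const fun x _ =>
          (hper (n + 1)).norm_le_integral_norm_deriv hT (hper (n + 2)) hderiv' hcont hmean' x
    calc ‖g 0 y‖ ≤ T ^ n * ∫ x in (0:ℝ)..T, ‖g (n + 1) x‖ :=
          ih (fun j hj => hderiv j (by omega)) hcont'
      _ ≤ T ^ n * (T * ∫ x in (0:ℝ)..T, ‖g (n + 2) x‖) := by gcongr
      _ = T ^ (n + 1) * ∫ x in (0:ℝ)..T, ‖g (n + 1 + 1) x‖ := by ring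

end Poincare

theorem periodic_prod_intCast {β : Type*} {F : ℝ × ℝ → β} (h₁ : Periodic F (1, 0))
    (h₂ : Periodic F (0, 1)) (m n : ℤ) : Periodic F ((m : ℝ), (n : ℝ)) := by
  simpa using (h₁.zsmul m).add_period (h₂.zsmul n)

section LineAverage
variable {E : Type*} [NormedAddCommGroup E] [NormedSpace ℝ E]

theorem intervalIntegral_integral_swap_of_continuous {H : ℝ → ℝ → E}
    (hH : Continuous (uncurry H)) {a₁ b₁ a₂ b₂ : ℝ} (h₁ : a₁ ≤ b₁) (h₂ : a₂ ≤ b₂) :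
    ∫ x in a₁..b₁, ∫ y in a₂..b₂, H x y = ∫ y in a₂..b₂, ∫ x in a₁..b₁, H x y := by
  simp only [intervalIntegral.integral_of_le h₁, intervalIntegral.integral_of_le h₂]
  refine integral_integral_swap ?_
  rw [Measure.prod_restrict, ← Measure.volume_eq_prod]
  exact (hH.continuousOn.integrableOn_compact (isCompact_Icc.prod isCompact_Icc)).mono_set
    (Set.prod_mono Set.Ioc_subset_Icc_self Set.Ioc_subset_Icc_self)

theorem Function.Periodic.intervalIntegral_comp_int_mul {H : ℝ → E} (hH : Periodic H 1)
    (hcont : Continuous H) {a : ℤ} (ha : a ≠ 0) :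
    ∫ t in (0:ℝ)..1, H (a * t) = ∫ t in (0:ℝ)..1, H t := by
  have hper := hH.intervalIntegral_add_zsmul_eq a 0 fun _ _ => hcont.intervalIntegrable _ _
  simp only [zero_add, zsmul_eq_mul, mul_one] at hper
  rw [intervalIntegral.integral_comp_mul_left H (Int.cast_ne_zero.2 ha), mul_zero, mul_one, hper,
    ← Int.cast_smul_eq_zsmul ℝ, inv_smul_smul₀ (Int.cast_ne_zero.2 ha)]

/-- `geodAvg` with values in an arbitrary normed space: `geodAvg F a b = lineAverage F a b`
holds by `rfl`. -/
noncomputable def lineAverage (F : ℝ × ℝ → E) (a b : ℤ) (c : ℝ) : E :=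
  ∫ t in (0:ℝ)..1, F ((a : ℝ) * t, (b : ℝ) * t + c)

variable {F : ℝ × ℝ → E} {a b : ℤ}

theorem continuous_lineAverage (hF : Continuous F) (a b : ℤ) : Continuous (lineAverage F a b) :=
  intervalIntegral.continuous_parametric_intervalIntegral_of_continuous' (by fun_prop) 0 1

theorem lineAverage_periodic_one (h₂ : Periodic F (0, 1)) : Periodic (lineAverage F a b) 1 :=
  fun c => intervalIntegral.integral_congr fun t _ => by
    simpa [add_assoc] using h₂ ((a : ℝ) * t, (b : ℝ) * t + c)

theorem lineAverage_periodic_div (h₁ : Periodic F (1, 0)) (h₂ : Periodic F (0, 1)) (ha : a ≠ 0) :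
    Periodic (lineAverage F a b) ((b : ℝ) / a) := by
  intro c
  have haR : (a : ℝ) ≠ 0 := Int.cast_ne_zero.2 ha
  set φ : ℝ → E := fun t => F ((a : ℝ) * t, (b : ℝ) * t + c)
  have hφ : Periodic φ 1 := fun t => by
    simpa [φ, mul_add, add_right_comm] using
      periodic_prod_intCast h₁ h₂ a b ((a : ℝ) * t, (b : ℝ) * t + c)
  calc lineAverage F a b (c + b / a) = ∫ t in (0:ℝ)..1, φ (t + (a : ℝ)⁻¹) :=
        intervalIntegral.integral_congr fun t _ => by
          have hshift : ((a : ℝ) * (t + (a : ℝ)⁻¹), (b : ℝ) * (t + (a : ℝ)⁻¹) + c)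
              = ((a : ℝ) * t, (b : ℝ) * t + (c + b / a)) + (1, 0) := by
            ext
            · simp [field]
            · simp [field]
              ring
          exact ((congrArg F hshift).trans (h₁ _)).symm
    _ = ∫ t in (0:ℝ)..1, φ t := by
        rw [intervalIntegral.integral_comp_add_right, zero_add, add_comm]
        simpa using hφ.intervalIntegral_add_eq (a : ℝ)⁻¹ 0

theorem lineAverage_periodic (h₁ : Periodic F (1, 0)) (h₂ : Periodic F (0, 1))
    (hab : Int.gcd a b = 1) (ha : a ≠ 0) : Periodic (lineAverage F a b) |(a : ℝ)|⁻¹ := by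
  obtain ⟨u, v, huv⟩ := Int.isCoprime_iff_gcd_eq_one.2 hab
  have hinv : Periodic (lineAverage F a b) (a : ℝ)⁻¹ := by
    have huvR : (u : ℝ) * a + v * b = 1 := by exact_mod_cast huv
    have hbezout : (a : ℝ)⁻¹ = u * 1 + v * (b / a) := by
      field_simp [Int.cast_ne_zero.2 ha]
      linarith
    rw [hbezout]
    exact ((lineAverage_periodic_one h₂).int_mul u).add_period
      ((lineAverage_periodic_div h₁ h₂ ha).int_mul v)
  rcases abs_choice (a : ℝ) with h | h <;> rw [h]
  · exact hinv
  · simpa only [inv_neg] using hinv.neg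

theorem integral_lineAverage (hF : Continuous F) (h₁ : Periodic F (1, 0))
    (h₂ : Periodic F (0, 1)) (ha : a ≠ 0) :
    ∫ c in (0:ℝ)..1, lineAverage F a b c = ∫ x in (0:ℝ)..1, ∫ y in (0:ℝ)..1, F (x, y) := by
  set H : ℝ → E := fun x => ∫ y in (0:ℝ)..1, F (x, y)
  have hinner : ∀ x t : ℝ, ∫ c in (0:ℝ)..1, F (x, b * t + c) = H x := fun x t => by
    have hper : Periodic (fun y => F (x, y)) 1 := fun y => by simpa using h₂ (x, y)
    rw [intervalIntegral.integral_comp_add_left (fun y => F (x, y))]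
    simpa using hper.intervalIntegral_add_eq (b * t) 0
  have hH : Periodic H 1 := fun x => intervalIntegral.integral_congr fun y _ => by
    simpa using h₁ (x, y)
  calc ∫ c in (0:ℝ)..1, lineAverage F a b c
      = ∫ t in (0:ℝ)..1, ∫ c in (0:ℝ)..1, F (a * t, b * t + c) :=
        intervalIntegral_integral_swap_of_continuous (by fun_prop) zero_le_one zero_le_one
    _ = ∫ t in (0:ℝ)..1, H (a * t) := by simp only [hinner]
    _ = ∫ x in (0:ℝ)..1, H x := hH.intervalIntegral_comp_int_mul
        (intervalIntegral.continuous_parametric_intervalIntegral_of_continuous'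
          (by fun_prop) 0 1) ha

theorem integral_lineAverage_period (hF : Continuous F) (h₁ : Periodic F (1, 0))
    (h₂ : Periodic F (0, 1)) (hab : Int.gcd a b = 1) (ha : a ≠ 0) :
    ∫ c in (0:ℝ)..|(a : ℝ)|⁻¹, lineAverage F a b c
      = |(a : ℝ)|⁻¹ • ∫ x in (0:ℝ)..1, ∫ y in (0:ℝ)..1, F (x, y) := by
  have habs : |(a : ℝ)| ≠ 0 := abs_ne_zero.2 (Int.cast_ne_zero.2 ha)
  have hsum := (lineAverage_periodic h₁ h₂ hab ha).intervalIntegral_add_zsmul_eq |a| 0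
    fun _ _ => (continuous_lineAverage hF a b).intervalIntegrable _ _
  rw [← Int.cast_smul_eq_zsmul ℝ, Int.cast_abs, smul_eq_mul, mul_inv_cancel₀ habs, zero_add,
    zero_add, integral_lineAverage hF h₁ h₂ ha, ← Int.cast_smul_eq_zsmul ℝ, Int.cast_abs] at hsum
  rw [hsum, inv_smul_smul₀ habs]

theorem integral_norm_lineAverage_le (hF : Continuous F) (h₁ : Periodic F (1, 0))
    (h₂ : Periodic F (0, 1)) (hab : Int.gcd a b = 1) (ha : a ≠ 0) :
    ∫ c in (0:ℝ)..|(a : ℝ)|⁻¹, ‖lineAverage F a b c‖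
      ≤ |(a : ℝ)|⁻¹ * ∫ x in (0:ℝ)..1, ∫ y in (0:ℝ)..1, ‖F (x, y)‖ := by
  rw [← smul_eq_mul, ← integral_lineAverage_period hF.norm (h₁.comp _) (h₂.comp _) hab ha]
  exact intervalIntegral.integral_mono_on (by positivity)
    ((continuous_lineAverage hF a b).norm.intervalIntegrable _ _)
    ((continuous_lineAverage hF.norm a b).intervalIntegrable _ _)
    fun c _ => intervalIntegral.norm_integral_le_integral_norm zero_le_one

theorem hasDerivAt_lineAverage (hF : ContDiff ℝ 1 F) (c : ℝ) :
    HasDerivAt (lineAverage F a b) (lineAverage (fun v => fderiv ℝ F v (0, 1)) a b c) c := by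
  set F' : ℝ × ℝ → E := fun v => fderiv ℝ F v (0, 1)
  have hF'c : Continuous F' := (hF.continuous_fderiv one_ne_zero).clm_apply continuous_const
  obtain ⟨K, hK⟩ := (isCompact_Icc.prod (isCompact_closedBall c 1)).exists_bound_of_continuousOn
    (f := fun p : ℝ × ℝ => F' ((a : ℝ) * p.1, (b : ℝ) * p.1 + p.2))
    (hF'c.comp (by fun_prop)).continuousOn
  refine (intervalIntegral.hasDerivAt_integral_of_dominated_loc_of_deriv_le (bound := fun _ => K)
    (F := fun x t => F ((a : ℝ) * t, (b : ℝ) * t + x))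
    (F' := fun x t => F' ((a : ℝ) * t, (b : ℝ) * t + x))
    (Metric.ball_mem_nhds c one_pos) (Filter.Eventually.of_forall fun x => ?_) ?_ ?_ ?_
    intervalIntegrable_const ?_).2
  · exact (hF.continuous.comp (by fun_prop)).aestronglyMeasurable
  · exact (hF.continuous.comp (by fun_prop)).intervalIntegrable _ _
  · exact (hF'c.comp (by fun_prop)).aestronglyMeasurable
  · refine Filter.Eventually.of_forall fun t ht x hx =>
      hK (t, x) ⟨?_, Metric.ball_subset_closedBall hx⟩
    simpa using Set.uIoc_subset_uIcc ht
  · refine Filter.Eventually.of_forall fun t _ x _ => ?_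
    have hline : HasDerivAt (fun x : ℝ => ((a : ℝ) * t, (b : ℝ) * t + x)) (0, 1) x :=
      (hasDerivAt_const x _).prodMk ((hasDerivAt_id x).const_add _)
    exact (hF.differentiable one_ne_zero _).hasFDerivAt.comp_hasDerivAt x hline

end LineAverage

theorem periodic2_iff {F : ℝ × ℝ → ℂ} : Periodic2 F ↔ Periodic F (1, 0) ∧ Periodic F (0, 1) := by
  simp only [Periodic2, Periodic, Prod.forall, Prod.mk_add_mk, add_zero, forall_and]

theorem L1norm_nonneg (F : ℝ × ℝ → ℂ) : 0 ≤ L1norm F :=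
  intervalIntegral.integral_nonneg zero_le_one fun _ _ =>
    intervalIntegral.integral_nonneg zero_le_one fun _ _ => norm_nonneg _

theorem pd2_eq_fderiv {F : ℝ × ℝ → ℂ} (hF : Differentiable ℝ F) :
    pd2 F = fun v => fderiv ℝ F v (0, 1) := by
  funext v
  have hline : HasDerivAt (fun y : ℝ => (v.1, y)) ((0 : ℝ), (1 : ℝ)) v.2 :=
    (hasDerivAt_const _ _).prodMk (hasDerivAt_id _)
  exact ((hF _).hasFDerivAt.comp_hasDerivAt _ hline).deriv

theorem periodic_pd2 {F : ℝ × ℝ → ℂ} {p : ℝ × ℝ} (h : Periodic F p) : Periodic (pd2 F) p := by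
  obtain ⟨p₁, p₂⟩ := p
  intro v
  simp only [pd2, Prod.fst_add, Prod.snd_add]
  rw [← deriv_comp_add_const]
  exact congrArg (deriv · v.2) (funext fun y => h (v.1, y))

theorem periodic_iterate_pd2 {F : ℝ × ℝ → ℂ} {p : ℝ × ℝ} (h : Periodic F p) (j : ℕ) :
    Periodic (pd2^[j] F) p := by
  induction j with
  | zero => exact h
  | succ j ih => rw [iterate_succ_apply']; exact periodic_pd2 ih

theorem contDiff_pd2 {F : ℝ × ℝ → ℂ} {n : ℕ} (hF : ContDiff ℝ (n + 1 : ℕ) F) :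
    ContDiff ℝ n (pd2 F) := by
  rw [pd2_eq_fderiv (hF.differentiable (by simp))]
  exact (hF.fderiv_right (by norm_cast)).clm_apply contDiff_const

theorem contDiff_iterate_pd2 {F : ℝ × ℝ → ℂ} {s : ℕ} (hF : ContDiff ℝ s F) {j : ℕ} (hj : j ≤ s) :
    ContDiff ℝ (s - j : ℕ) (pd2^[j] F) := by
  induction j with
  | zero => simpa using hF
  | succ j ih =>
    rw [iterate_succ_apply']
    exact contDiff_pd2 (by rw [show s - (j + 1) + 1 = s - j by omega]; exact ih (by omega))

theorem norm_geodAvg_le {F : ℝ × ℝ → ℂ} {s : ℕ} {a b : ℤ} (hs : s ≠ 0) (hF : ContDiff ℝ s F)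
    (h₁ : Periodic F (1, 0)) (h₂ : Periodic F (0, 1))
    (hmean : ∫ x in (0:ℝ)..1, ∫ y in (0:ℝ)..1, F (x, y) = 0)
    (hab : Int.gcd a b = 1) (ha : a ≠ 0) (c : ℝ) :
    ‖geodAvg F a b c‖ ≤ |(a : ℝ)|⁻¹ ^ s * L1norm (pd2^[s] F) := by
  obtain ⟨n, rfl⟩ := Nat.exists_eq_succ_of_ne_zero hs
  set T := |(a : ℝ)|⁻¹
  set g : ℕ → ℝ → ℂ := fun j => lineAverage (pd2^[j] F) a b
  have hT : 0 < T := inv_pos.2 (abs_pos.2 (Int.cast_ne_zero.2 ha))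
  have hper : ∀ j, Periodic (g j) T := fun j =>
    lineAverage_periodic (periodic_iterate_pd2 h₁ j) (periodic_iterate_pd2 h₂ j) hab ha
  have hderiv : ∀ j ≤ n, ∀ x, HasDerivAt (g j) (g (j + 1) x) x := fun j hj x => by
    have hC1 : ContDiff ℝ 1 (pd2^[j] F) :=
      (contDiff_iterate_pd2 hF (by omega)).of_le (by norm_cast; omega)
    simp only [g, iterate_succ_apply', pd2_eq_fderiv (hC1.differentiable one_ne_zero)]
    exact hasDerivAt_lineAverage hC1 x
  have hmean₀ : ∫ x in (0:ℝ)..T, g 0 x = 0 := by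
    show ∫ x in (0:ℝ)..|(a : ℝ)|⁻¹, lineAverage F a b x = 0
    rw [integral_lineAverage_period hF.continuous h₁ h₂ hab ha, hmean, smul_zero]
  have hcont : Continuous (pd2^[n + 1] F) := (contDiff_iterate_pd2 hF le_rfl).continuous
  calc ‖geodAvg F a b c‖ ≤ T ^ n * ∫ x in (0:ℝ)..T, ‖g (n + 1) x‖ :=
        norm_le_pow_mul_integral_norm_of_periodic hT hper n hderiv
          (continuous_lineAverage hcont a b) hmean₀ c
    _ ≤ T ^ n * (T * L1norm (pd2^[n + 1] F)) := by
        gcongr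
        exact integral_norm_lineAverage_le hcont (periodic_iterate_pd2 h₁ _)
          (periodic_iterate_pd2 h₂ _) hab ha
    _ = T ^ (n + 1) * L1norm (pd2^[n + 1] F) := by ring

theorem inv_abs_le_sqrt_two_div_sqrt {x y : ℝ} (hx : x ≠ 0) (hyx : |y| ≤ |x|) :
    |x|⁻¹ ≤ √2 / √(x ^ 2 + y ^ 2) := by
  have hsum : x ^ 2 + y ^ 2 ≤ 2 * |x| ^ 2 := by
    rw [sq_abs]
    nlinarith [sq_le_sq.2 hyx]
  have hsqrt : √(x ^ 2 + y ^ 2) ≤ √2 * |x| := by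
    rw [← Real.sqrt_sq (abs_nonneg x), ← Real.sqrt_mul zero_le_two]
    exact Real.sqrt_le_sqrt hsum
  rw [le_div_iff₀ (by positivity), inv_mul_le_iff₀ (abs_pos.2 hx), mul_comm]
  exact hsqrt

/-- for real `f ∈ C^s(T²)`, `s ≥ 2`, with mean value zero, and a closed geodesic
`γ(t) = (at, bt+c)` with `gcd(a,b)=1`, `a ≠ 0 ≠ b`, `|a| ≥ |b|`, the average of `f` over `γ`
is at most `C_s (max_{|α|=s} ‖∂_α f‖_{L¹}) / |γ|^s` where `|γ| = √(a²+b²)`. -/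
theorem stmt9 (s : ℕ) (hs : 2 ≤ s) :
    ∃ C : ℝ, 0 < C ∧
      ∀ (f : ℝ × ℝ → ℝ), Periodic2 (fun v => (f v : ℂ)) →
        ContDiff ℝ s f →
        (∫ x in (0:ℝ)..1, ∫ y in (0:ℝ)..1, f (x, y)) = 0 →
        ∀ M : ℝ,
          (∀ a1 a2 : ℕ, a1 + a2 = s → L1norm (pdMix a1 a2 (fun v => (f v : ℂ))) ≤ M) →
          ∀ a b : ℤ, Int.gcd a b = 1 → a ≠ 0 → b ≠ 0 → |b| ≤ |a| →
            ∀ c : ℝ,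
              ‖geodAvg (fun v => (f v : ℂ)) a b c‖ ≤
                C * M / Real.sqrt ((a : ℝ) ^ 2 + (b : ℝ) ^ 2) ^ s := by
  refine ⟨√2 ^ s, by positivity, fun f hper hf hmean M hM a b hab ha _ hba c => ?_⟩
  obtain ⟨h₁, h₂⟩ := periodic2_iff.1 hper
  have hF : ContDiff ℝ s (fun v => (f v : ℂ)) := Complex.ofRealCLM.contDiff.comp hf
  have hFmean : ∫ x in (0:ℝ)..1, ∫ y in (0:ℝ)..1, (f (x, y) : ℂ) = 0 := by
    simp only [intervalIntegral.integral_ofReal, hmean, Complex.ofReal_zero]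
  have hL1 : L1norm (pd2^[s] fun v => (f v : ℂ)) ≤ M := hM 0 s (zero_add s)
  have hT : |(a : ℝ)|⁻¹ ≤ √2 / √((a : ℝ) ^ 2 + (b : ℝ) ^ 2) :=
    inv_abs_le_sqrt_two_div_sqrt (Int.cast_ne_zero.2 ha) (by exact_mod_cast hba)
  calc ‖geodAvg (fun v => (f v : ℂ)) a b c‖
      ≤ |(a : ℝ)|⁻¹ ^ s * L1norm (pd2^[s] fun v => (f v : ℂ)) :=
        norm_geodAvg_le (by omega) hF h₁ h₂ hFmean hab ha c
    _ ≤ (√2 / √((a : ℝ) ^ 2 + (b : ℝ) ^ 2)) ^ s * M := by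
        gcongr
        exact L1norm_nonneg _
    _ = √2 ^ s * M / √((a : ℝ) ^ 2 + (b : ℝ) ^ 2) ^ s := by rw [div_pow]; ring
end

section
/- Let N ∈ ℕ and f(x) = ∑_{‖k‖ ≤ N} f̂(k) e^{2πi⟨k,x⟩} be a real-valued trigonometric polynomial on T² with f̂(0,0) = 0 and f ≠ 0. Then the supremum over closed geodesics γ of (1/|γ|)|∫_γ f dH¹| is attained by a closed geodesic of length at most C·N for a universal constant C. -/
open MeasureTheory

/-- The set of absolute average values of `f` over all closed geodesics of `T²`. -/
def geodVals (f : ℝ × ℝ → ℂ) : Set ℝ :=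
  {v : ℝ | ∃ (a b : ℤ) (p : ℝ × ℝ), Int.gcd a b = 1 ∧ v = ‖geodAvgP f a b p‖}


noncomputable def gfun (F : ℤ × ℤ → ℂ) (N : ℕ) (a b : ℤ) (p : ℝ × ℝ) : ℂ :=
  ∑ k ∈ Finset.Icc ((-(N:ℤ), -(N:ℤ))) (((N:ℤ), (N:ℤ))),
    if a * k.1 + b * k.2 = 0 then
      F k * Complex.exp (2 * (Real.pi : ℂ) * Complex.I * ((k.1 : ℂ) * p.1 + (k.2 : ℂ) * p.2))
    else 0

lemma aux_intExp (m : ℤ) :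
    (∫ t in (0:ℝ)..1, Complex.exp ((2 * (Real.pi:ℂ) * Complex.I * (m:ℂ)) * (t:ℝ)))
      = if m = 0 then 1 else 0 := by
  rcases eq_or_ne m 0 with h | h
  · simp [h]
  · rw [if_neg h]
    have hπ : (Real.pi : ℂ) ≠ 0 := by exact_mod_cast Real.pi_ne_zero
    have hm : (m : ℂ) ≠ 0 := Int.cast_ne_zero.mpr h
    have hc : (2 * (Real.pi:ℂ) * Complex.I * (m:ℂ)) ≠ 0 :=
      mul_ne_zero (mul_ne_zero (mul_ne_zero two_ne_zero hπ) Complex.I_ne_zero) hm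
    rw [integral_exp_mul_complex hc]
    have h1 : Complex.exp ((2 * (Real.pi:ℂ) * Complex.I * (m:ℂ)) * ((1:ℝ):ℂ)) = 1 := by
      rw [show ((2 * (Real.pi:ℂ) * Complex.I * (m:ℂ)) * ((1:ℝ):ℂ))
          = (m:ℂ) * (2 * Real.pi * Complex.I) by push_cast; ring]
      exact Complex.exp_int_mul_two_pi_mul_I m
    rw [Complex.ofReal_one, mul_one] at h1
    simp [h1]

lemma aux_mem_box {N : ℕ} {F : ℤ × ℤ → ℂ}
    (hsupp : ∀ k : ℤ × ℤ, (N : ℝ) ^ 2 < (k.1 : ℝ) ^ 2 + (k.2 : ℝ) ^ 2 → F k = 0)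
    {k : ℤ × ℤ} (hk : F k ≠ 0) :
    k ∈ Finset.Icc ((-(N:ℤ), -(N:ℤ))) (((N:ℤ), (N:ℤ))) := by
  by_contra h
  apply hk
  apply hsupp
  have hbox : ¬(((-(N:ℤ) ≤ k.1 ∧ -(N:ℤ) ≤ k.2) ∧ (k.1 ≤ N ∧ k.2 ≤ N))) := by
    simpa [Finset.mem_Icc, Prod.le_def] using h
  have h4 : k.1 < -(N:ℤ) ∨ (N:ℤ) < k.1 ∨ k.2 < -(N:ℤ) ∨ (N:ℤ) < k.2 := by omega
  have hN : (0:ℤ) ≤ (N:ℤ) := Int.natCast_nonneg N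
  have hZ : (N:ℤ)^2 < k.1^2 + k.2^2 := by
    rcases h4 with h'|h'|h'|h' <;> nlinarith [sq_nonneg k.1, sq_nonneg k.2]
  exact_mod_cast hZ

lemma aux_f_eq {N : ℕ} {F : ℤ × ℤ → ℂ} {f : ℝ × ℝ → ℂ}
    (hsupp : ∀ k : ℤ × ℤ, (N : ℝ) ^ 2 < (k.1 : ℝ) ^ 2 + (k.2 : ℝ) ^ 2 → F k = 0)
    (hf : f = fun v => ∑' k : ℤ × ℤ,
      F k * Complex.exp (2 * (Real.pi : ℂ) * Complex.I * ((k.1 : ℂ) * v.1 + (k.2 : ℂ) * v.2)))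
    (v : ℝ × ℝ) :
    f v = ∑ k ∈ Finset.Icc ((-(N:ℤ), -(N:ℤ))) (((N:ℤ), (N:ℤ))),
      F k * Complex.exp (2 * (Real.pi : ℂ) * Complex.I * ((k.1 : ℂ) * v.1 + (k.2 : ℂ) * v.2)) := by
  rw [hf]
  refine tsum_eq_sum fun k hk => ?_
  have : F k = 0 := by
    by_contra h
    exact hk (aux_mem_box hsupp h)
  simp [this]

lemma aux_geod_eq {N : ℕ} {F : ℤ × ℤ → ℂ} {f : ℝ × ℝ → ℂ}
    (hsupp : ∀ k : ℤ × ℤ, (N : ℝ) ^ 2 < (k.1 : ℝ) ^ 2 + (k.2 : ℝ) ^ 2 → F k = 0)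
    (hf : f = fun v => ∑' k : ℤ × ℤ,
      F k * Complex.exp (2 * (Real.pi : ℂ) * Complex.I * ((k.1 : ℂ) * v.1 + (k.2 : ℂ) * v.2)))
    (a b : ℤ) (p : ℝ × ℝ) :
    geodAvgP f a b p = gfun F N a b p := by
  have step1 : geodAvgP f a b p
      = ∫ t in (0:ℝ)..1, ∑ k ∈ Finset.Icc ((-(N:ℤ), -(N:ℤ))) (((N:ℤ), (N:ℤ))),
          (F k * Complex.exp (2 * (Real.pi : ℂ) * Complex.I * ((k.1 : ℂ) * p.1 + (k.2 : ℂ) * p.2)))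
            * Complex.exp ((2 * (Real.pi:ℂ) * Complex.I * ((a * k.1 + b * k.2 : ℤ):ℂ)) * (t:ℝ)) := by
    unfold geodAvgP
    apply intervalIntegral.integral_congr
    intro t _
    dsimp only
    rw [aux_f_eq hsupp hf]
    refine Finset.sum_congr rfl fun k _ => ?_
    dsimp only
    rw [mul_assoc (F k), ← Complex.exp_add]
    congr 1
    push_cast
    ring
  rw [step1, intervalIntegral.integral_finset_sum]
  · unfold gfun
    refine Finset.sum_congr rfl fun k _ => ?_
    rw [intervalIntegral.integral_const_mul, aux_intExp]
    by_cases h : a * k.1 + b * k.2 = 0 <;> simp [h]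
  · intro k _
    apply Continuous.intervalIntegrable
    exact continuous_const.mul (Complex.continuous_exp.comp
      (continuous_const.mul Complex.continuous_ofReal))

lemma aux_gfun_cont (F : ℤ × ℤ → ℂ) (N : ℕ) (a b : ℤ) : Continuous (gfun F N a b) := by
  unfold gfun
  apply continuous_finset_sum
  intro k _
  by_cases h : a * k.1 + b * k.2 = 0
  · simp only [if_pos h]
    apply continuous_const.mul
    apply Complex.continuous_exp.comp
    apply continuous_const.mul
    exact ((continuous_const.mul (Complex.continuous_ofReal.comp continuous_fst)).add
      (continuous_const.mul (Complex.continuous_ofReal.comp continuous_snd)))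
  · simp only [if_neg h]
    exact continuous_const

lemma aux_exp_shift (k₁ k₂ : ℤ) (x y : ℝ) (m₁ m₂ : ℤ) :
    Complex.exp (2 * (Real.pi:ℂ) * Complex.I *
      ((k₁:ℂ) * ((x - (m₁:ℤ) : ℝ):ℂ) + (k₂:ℂ) * ((y - (m₂:ℤ) : ℝ):ℂ)))
    = Complex.exp (2 * (Real.pi:ℂ) * Complex.I * ((k₁:ℂ) * (x:ℂ) + (k₂:ℂ) * (y:ℂ))) := by
  rw [show (2 * (Real.pi:ℂ) * Complex.I *
      ((k₁:ℂ) * ((x - (m₁:ℤ) : ℝ):ℂ) + (k₂:ℂ) * ((y - (m₂:ℤ) : ℝ):ℂ)))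
      = 2 * (Real.pi:ℂ) * Complex.I * ((k₁:ℂ) * (x:ℂ) + (k₂:ℂ) * (y:ℂ))
        + ((-(k₁ * m₁ + k₂ * m₂) : ℤ):ℂ) * (2 * Real.pi * Complex.I) by push_cast; ring]
  rw [Complex.exp_add, Complex.exp_int_mul_two_pi_mul_I, mul_one]

lemma aux_gfun_fract (F : ℤ × ℤ → ℂ) (N : ℕ) (a b : ℤ) (p : ℝ × ℝ) :
    gfun F N a b (Int.fract p.1, Int.fract p.2) = gfun F N a b p := by
  unfold gfun
  refine Finset.sum_congr rfl fun k _ => ?_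
  by_cases h : a * k.1 + b * k.2 = 0
  · simp only [if_pos h]
    congr 1
    have h1 : Int.fract p.1 = p.1 - (⌊p.1⌋ : ℤ) := rfl
    have h2 : Int.fract p.2 = p.2 - (⌊p.2⌋ : ℤ) := rfl
    rw [h1, h2]
    exact aux_exp_shift k.1 k.2 p.1 p.2 ⌊p.1⌋ ⌊p.2⌋
  · simp [h]

lemma aux_gfun_long {N : ℕ} {F : ℤ × ℤ → ℂ}
    (hsupp : ∀ k : ℤ × ℤ, (N : ℝ) ^ 2 < (k.1 : ℝ) ^ 2 + (k.2 : ℝ) ^ 2 → F k = 0)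
    (h00 : F (0, 0) = 0) {a b : ℤ} (hab : Int.gcd a b = 1)
    (hlen : (N:ℤ)^2 < a^2 + b^2) (p : ℝ × ℝ) :
    gfun F N a b p = 0 := by
  unfold gfun
  apply Finset.sum_eq_zero
  intro k _
  by_cases h : a * k.1 + b * k.2 = 0
  · rw [if_pos h]
    suffices hFk : F k = 0 by simp [hFk]
    by_contra hFk
    have hk2 : k.1^2 + k.2^2 ≤ (N:ℤ)^2 := by
      by_contra hk2
      push_neg at hk2
      exact hFk (hsupp k (by exact_mod_cast hk2))
    have hco : IsCoprime a b := Int.isCoprime_iff_gcd_eq_one.mpr hab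
    have hd : a ∣ k.2 := by
      have hdvd : a ∣ b * k.2 := ⟨-k.1, by linear_combination h⟩
      exact hco.dvd_of_dvd_mul_left hdvd
    obtain ⟨m, hm⟩ := hd
    rcases eq_or_ne a 0 with ha | ha
    · subst ha
      have hb1 : b.natAbs = 1 := by simpa [Int.gcd] using hab
      have hb : b = 1 ∨ b = -1 := by omega
      have hb2 : b^2 = 1 := by rcases hb with hb | hb <;> simp [hb]
      have hk20 : k.2 = 0 := by
        rcases hb with hb | hb <;> subst hb <;> omega
      have hk10 : k.1 = 0 := by nlinarith
      have : k = ((0:ℤ), (0:ℤ)) := Prod.ext hk10 hk20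
      rw [this] at hFk
      exact hFk h00
    · have hk1 : k.1 = -(b * m) := by
        have : a * k.1 = a * (-(b * m)) := by rw [hm] at h; linear_combination h
        exact mul_left_cancel₀ ha this
      have hsum : m^2 * (a^2 + b^2) ≤ (N:ℤ)^2 := by
        rw [hk1, hm] at hk2; nlinarith [hk2]
      have hm0 : m = 0 := by
        by_contra hm0
        have h1m : 1 ≤ m^2 := by
          rcases lt_or_gt_of_ne hm0 with h' | h' <;> nlinarith
        nlinarith
      subst hm0
      have : k = ((0:ℤ), (0:ℤ)) := Prod.ext (by omega) (by omega)
      rw [this] at hFk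
      exact hFk h00
  · simp [h]

/-- corollary: for a real-valued mean-zero trigonometric polynomial
`f(x) = ∑_{‖k‖ ≤ N} f̂(k) e^{2πi⟨k,x⟩}`, `f ≠ 0`, the supremum over closed geodesics of
`(1/|γ|)|∫_γ f|` is attained by a geodesic of length at most `C N`, `C` universal. -/
theorem stmt12 :
    ∃ C : ℝ, 0 < C ∧
      ∀ (N : ℕ) (F : ℤ × ℤ → ℂ) (f : ℝ × ℝ → ℂ),
        (∀ k : ℤ × ℤ, (N : ℝ) ^ 2 < (k.1 : ℝ) ^ 2 + (k.2 : ℝ) ^ 2 → F k = 0) →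
        F (0, 0) = 0 →
        (f = fun v => ∑' k : ℤ × ℤ,
          F k * Complex.exp (2 * (Real.pi : ℂ) * Complex.I * ((k.1 : ℂ) * v.1 + (k.2 : ℂ) * v.2))) →
        (∀ v, (f v).im = 0) →
        (∃ v, f v ≠ 0) →
        ∃ (a b : ℤ) (p : ℝ × ℝ), Int.gcd a b = 1 ∧
          ‖geodAvgP f a b p‖ = sSup (geodVals f) ∧
          Real.sqrt ((a : ℝ) ^ 2 + (b : ℝ) ^ 2) ≤ C * N := by
  refine ⟨1, one_pos, ?_⟩
  intro N F f hsupp h00 hf _hreal hne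
  -- N ≥ 1
  have hN1 : 1 ≤ N := by
    by_contra hN
    have hN0 : N = 0 := by omega
    obtain ⟨v, hv⟩ := hne
    apply hv
    rw [hf]
    have hF0 : ∀ k : ℤ × ℤ, F k = 0 := by
      intro k
      rcases eq_or_ne k ((0:ℤ), (0:ℤ)) with rfl | hk
      · exact h00
      · apply hsupp
        have hne0 : k.1 ≠ 0 ∨ k.2 ≠ 0 := by
          by_contra hcon
          push_neg at hcon
          exact hk (Prod.ext hcon.1 hcon.2)
        have h1 : (0:ℝ) < (k.1:ℝ)^2 + (k.2:ℝ)^2 := by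
          rcases hne0 with h' | h'
          · have : ((k.1:ℝ)) ≠ 0 := Int.cast_ne_zero.mpr h'
            nlinarith [sq_nonneg ((k.2:ℝ)), sq_abs ((k.1:ℝ)), abs_pos.mpr this, sq_nonneg (|(k.1:ℝ)| - 1)]
          · have : ((k.2:ℝ)) ≠ 0 := Int.cast_ne_zero.mpr h'
            nlinarith [sq_nonneg ((k.1:ℝ)), sq_abs ((k.2:ℝ)), abs_pos.mpr this, sq_nonneg (|(k.2:ℝ)| - 1)]
        simpa [hN0] using h1
    simp [hF0]
  have hgeq : ∀ (a b : ℤ) (p : ℝ × ℝ), geodAvgP f a b p = gfun F N a b p :=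
    fun a b p => aux_geod_eq hsupp hf a b p
  set S : Finset (ℤ × ℤ) := Finset.Icc ((-(N:ℤ), -(N:ℤ))) (((N:ℤ), (N:ℤ))) with hS
  set T : Finset (ℤ × ℤ) :=
    S.filter (fun ab => Int.gcd ab.1 ab.2 = 1 ∧ ab.1^2 + ab.2^2 ≤ (N:ℤ)^2) with hT
  have hNZ : (1:ℤ) ≤ (N:ℤ) := by exact_mod_cast hN1
  have hT01 : ((0:ℤ), (1:ℤ)) ∈ T := by
    simp only [hT, hS, Finset.mem_filter, Finset.mem_Icc, Prod.le_def]
    refine ⟨⟨⟨by omega, by omega⟩, ⟨by omega, by omega⟩⟩, by decide, by nlinarith⟩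
  have hTne : T.Nonempty := ⟨_, hT01⟩
  -- max point for each direction
  have hmaxpt : ∀ ab : ℤ × ℤ, ∃ p ∈ Set.Icc ((0:ℝ), (0:ℝ)) (1, 1),
      ∀ q ∈ Set.Icc ((0:ℝ), (0:ℝ)) (1, 1),
        ‖gfun F N ab.1 ab.2 q‖ ≤ ‖gfun F N ab.1 ab.2 p‖ := by
    intro ab
    have hcpt : IsCompact (Set.Icc ((0:ℝ), (0:ℝ)) (1, 1)) := isCompact_Icc
    have hne' : (Set.Icc ((0:ℝ), (0:ℝ)) (1, 1)).Nonempty :=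
      ⟨(0, 0), by simp [Set.mem_Icc, Prod.le_def]⟩
    obtain ⟨p, hp, hmax⟩ := hcpt.exists_isMaxOn hne'
      ((aux_gfun_cont F N ab.1 ab.2).norm.continuousOn)
    exact ⟨p, hp, fun q hq => hmax hq⟩
  choose P hPmem hPmax using hmaxpt
  obtain ⟨ab0, hab0T, hab0max⟩ :=
    T.exists_max_image (fun ab => ‖gfun F N ab.1 ab.2 (P ab)‖) hTne
  set M : ℝ := ‖gfun F N ab0.1 ab0.2 (P ab0)‖ with hM
  have hub : ∀ v ∈ geodVals f, v ≤ M := by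
    rintro v ⟨a, b, p, hab, rfl⟩
    rw [hgeq]
    by_cases hlen : a^2 + b^2 ≤ (N:ℤ)^2
    · have habT : (a, b) ∈ T := by
        simp only [hT, hS, Finset.mem_filter, Finset.mem_Icc, Prod.le_def]
        have h1 : -(N:ℤ) ≤ a := by nlinarith [sq_nonneg (a + N), sq_nonneg b]
        have h2 : a ≤ (N:ℤ) := by nlinarith [sq_nonneg (a - N), sq_nonneg b]
        have h3 : -(N:ℤ) ≤ b := by nlinarith [sq_nonneg (b + N), sq_nonneg a]
        have h4 : b ≤ (N:ℤ) := by nlinarith [sq_nonneg (b - N), sq_nonneg a]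
        exact ⟨⟨⟨h1, h3⟩, ⟨h2, h4⟩⟩, hab, hlen⟩
      rw [← aux_gfun_fract F N a b p]
      have hmem : (Int.fract p.1, Int.fract p.2) ∈ Set.Icc ((0:ℝ), (0:ℝ)) (1, 1) := by
        constructor <;> constructor <;>
          simp [Int.fract_nonneg, (Int.fract_lt_one _).le]
      calc ‖gfun F N a b (Int.fract p.1, Int.fract p.2)‖
          ≤ ‖gfun F N a b (P (a, b))‖ := hPmax (a, b) _ hmem
        _ ≤ M := hab0max (a, b) habT
    · push_neg at hlen
      rw [aux_gfun_long hsupp h00 hab hlen]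
      rw [norm_zero]
      exact norm_nonneg _
  have hab0' : ab0 ∈ S ∧ Int.gcd ab0.1 ab0.2 = 1 ∧ ab0.1^2 + ab0.2^2 ≤ (N:ℤ)^2 := by
    simpa [hT, Finset.mem_filter] using hab0T
  have hmemM : M ∈ geodVals f :=
    ⟨ab0.1, ab0.2, P ab0, hab0'.2.1, by rw [hgeq]⟩
  have hsup : sSup (geodVals f) = M :=
    le_antisymm (csSup_le ⟨M, hmemM⟩ hub) (le_csSup ⟨M, hub⟩ hmemM)
  refine ⟨ab0.1, ab0.2, P ab0, hab0'.2.1, by rw [hgeq, hsup], ?_⟩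
  rw [one_mul]
  have hcast : ((ab0.1:ℝ))^2 + (ab0.2:ℝ)^2 ≤ (N:ℝ)^2 := by exact_mod_cast hab0'.2.2
  calc Real.sqrt ((ab0.1:ℝ)^2 + (ab0.2:ℝ)^2) ≤ Real.sqrt ((N:ℝ)^2) :=
        Real.sqrt_le_sqrt hcast
    _ = (N:ℝ) := Real.sqrt_sq (Nat.cast_nonneg N)
end

section
/- Let f ∈ L²(T²) with absolutely convergent Fourier series and f̂(0,0) = 0, and let N ∈ ℕ. Then ∑_{‖k‖≤N} |f̂(k)|² − ∑_{|k₁|≤N} |f̂(k₁,0)|² ≤ C·N² · max_{γ closed geodesic, |γ| ≤ 2N} |(1/|γ|)∫_γ f dH¹|², for a universal constant C. -/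
open MeasureTheory

/-!
For a direction `(a, b)` with `a ≠ 0`, the closed geodesics `t ↦ (a t, b t + c)`, `c ∈ [0, 1)`,
foliate the torus, so `∫_{T²} g = ∫₀¹ geodAvg g a b c dc` for continuous periodic `g`. When
`k ⊥ (a, b)` the character `e^{-2πi k·v}` is constant on each of these geodesics, and applying the
identity to `f · e^{-2πi k·v}` gives `|f̂(k)| ≤ sup_c |geodAvg f a b c|`. Every lattice point `k` of
the disk of radius `N` off the `k₁`-axis is orthogonal to the primitive direction
`(k₂, -k₁) / gcd(k₁, k₂)`, of length at most `|k| ≤ N`, and there are at most `6 N²` such points.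
-/

open Complex Finset

namespace Periodic2

variable {f g : ℝ × ℝ → ℂ}

lemma mul (hf : Periodic2 f) (hg : Periodic2 g) : Periodic2 (f * g) := fun x y =>
  ⟨by simp only [Pi.mul_apply, (hf x y).1, (hg x y).1],
    by simp only [Pi.mul_apply, (hf x y).2, (hg x y).2]⟩

lemma apply_fract (hf : Periodic2 f) (x y : ℝ) : f (Int.fract x, Int.fract y) = f (x, y) := by
  have hx : Function.Periodic (fun x => f (x, y)) 1 := fun x => (hf x y).1
  have hy : Function.Periodic (fun y => f (Int.fract x, y)) 1 := fun y => (hf _ y).2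
  calc f (Int.fract x, Int.fract y) = f (Int.fract x, y - ⌊y⌋ * 1) := by rw [mul_one]; rfl
    _ = f (x - ⌊x⌋ * 1, y) := by rw [hy.sub_int_mul_eq ⌊y⌋, mul_one]; rfl
    _ = f (x, y) := hx.sub_int_mul_eq ⌊x⌋

lemma exists_norm_le (hf : Periodic2 f) (hc : Continuous f) : ∃ M, ∀ v, ‖f v‖ ≤ M := by
  obtain ⟨M, hM⟩ := (isCompact_Icc.prod isCompact_Icc).exists_bound_of_continuousOn
    (s := Set.Icc (0:ℝ) 1 ×ˢ Set.Icc (0:ℝ) 1) hc.continuousOn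
  refine ⟨M, fun ⟨x, y⟩ => ?_⟩
  rw [← hf.apply_fract]
  exact hM _ ⟨⟨Int.fract_nonneg x, (Int.fract_lt_one x).le⟩,
    ⟨Int.fract_nonneg y, (Int.fract_lt_one y).le⟩⟩

end Periodic2

lemma norm_geodAvg_le_s16 {f : ℝ × ℝ → ℂ} {B : ℝ} (hB : ∀ v, ‖f v‖ ≤ B) (a b : ℤ) (c : ℝ) :
    ‖geodAvg f a b c‖ ≤ B := by
  simpa [geodAvg] using intervalIntegral.norm_integral_le_of_norm_le_const (a := 0) (b := 1)
    fun t _ => hB ((a : ℝ) * t, (b : ℝ) * t + c)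

theorem Function.Periodic.intervalIntegral_comp_int_mul_s16 {E : Type*} [NormedAddCommGroup E]
    [NormedSpace ℝ E] {f : ℝ → E} {T : ℝ} (hf : Function.Periodic f T)
    (hint : ∀ t₁ t₂, IntervalIntegrable f volume t₁ t₂) {a : ℤ} (ha : a ≠ 0) :
    ∫ t in (0:ℝ)..T, f (a * t) = ∫ x in (0:ℝ)..T, f x := by
  have haR : (a : ℝ) ≠ 0 := Int.cast_ne_zero.mpr ha
  have hmul : ∫ x in (0:ℝ)..a * T, f x = a • ∫ x in (0:ℝ)..T, f x := by
    simpa [zsmul_eq_mul] using hf.intervalIntegral_add_zsmul_eq a 0 hint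
  rw [intervalIntegral.integral_comp_mul_left f haR, mul_zero, hmul,
    ← Int.cast_smul_eq_zsmul ℝ, smul_smul, inv_mul_cancel₀ haR, one_smul]

theorem Periodic2.integral_eq_integral_geodAvg {f : ℝ × ℝ → ℂ} (hf : Periodic2 f)
    (hc : Continuous f) {a : ℤ} (ha : a ≠ 0) (b : ℤ) :
    ∫ x in (0:ℝ)..1, ∫ y in (0:ℝ)..1, f (x, y) = ∫ c in (0:ℝ)..1, geodAvg f a b c := by
  set H : ℝ → ℂ := fun x => ∫ y in (0:ℝ)..1, f (x, y)
  have hH : Function.Periodic H 1 := fun x => by simp only [H, (hf x _).1]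
  have hHc : Continuous H :=
    intervalIntegral.continuous_parametric_intervalIntegral_of_continuous'
      (f := fun x y => f (x, y)) hc 0 1
  have hshift (t : ℝ) : H (a * t) = ∫ c in (0:ℝ)..1, f (a * t, b * t + c) := by
    have hy : Function.Periodic (fun y => f (a * t, y)) 1 := fun y => (hf _ y).2
    rw [intervalIntegral.integral_comp_add_left (fun y => f (a * t, y)), add_zero,
      hy.intervalIntegral_add_eq _ 0, zero_add]
  have hint : IntegrableOn (Function.uncurry fun t c => f (a * t, b * t + c))
      (Set.uIoc 0 1 ×ˢ Set.uIoc 0 1) :=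
    ((hc.comp (by fun_prop)).continuousOn.integrableOn_compact
      (isCompact_uIcc.prod isCompact_uIcc)).mono_set
      (Set.prod_mono Set.uIoc_subset_uIcc Set.uIoc_subset_uIcc)
  calc ∫ x in (0:ℝ)..1, H x = ∫ t in (0:ℝ)..1, H (a * t) :=
        (hH.intervalIntegral_comp_int_mul_s16 (fun _ _ => hHc.intervalIntegrable _ _) ha).symm
    _ = ∫ t in (0:ℝ)..1, ∫ c in (0:ℝ)..1, f (a * t, b * t + c) := by simp only [hshift]
    _ = ∫ c in (0:ℝ)..1, geodAvg f a b c := intervalIntegral_intervalIntegral_swap hint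

noncomputable def fourierKernel (k : ℤ × ℤ) (v : ℝ × ℝ) : ℂ :=
  exp (-2 * (Real.pi : ℂ) * I * ((k.1 : ℂ) * v.1 + (k.2 : ℂ) * v.2))

lemma fc_eq_integral_mul_fourierKernel (f : ℝ × ℝ → ℂ) (k : ℤ × ℤ) :
    fc f k = ∫ x in (0:ℝ)..1, ∫ y in (0:ℝ)..1, (f * fourierKernel k) (x, y) := rfl

lemma continuous_fourierKernel (k : ℤ × ℤ) : Continuous (fourierKernel k) := by
  unfold fourierKernel; fun_prop

lemma norm_fourierKernel (k : ℤ × ℤ) (v : ℝ × ℝ) : ‖fourierKernel k v‖ = 1 := by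
  rw [fourierKernel, ← norm_exp_ofReal_mul_I (-2 * Real.pi * (k.1 * v.1 + k.2 * v.2))]
  push_cast
  ring_nf

lemma fourierKernel_add_int (k : ℤ × ℤ) (v : ℝ × ℝ) (m n : ℤ) :
    fourierKernel k (v.1 + m, v.2 + n) = fourierKernel k v := by
  rw [fourierKernel, fourierKernel, ← mul_one (exp (_ * (_ * v.1 + _))),
    ← exp_int_mul_two_pi_mul_I (-(k.1 * m + k.2 * n)), ← exp_add]
  push_cast
  ring_nf

lemma periodic2_fourierKernel (k : ℤ × ℤ) : Periodic2 (fourierKernel k) := fun x y =>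
  ⟨by simpa using fourierKernel_add_int k (x, y) 1 0,
    by simpa using fourierKernel_add_int k (x, y) 0 1⟩

lemma fourierKernel_geodesic {k : ℤ × ℤ} {a b : ℤ} (hk : k.1 * a + k.2 * b = 0) (t c : ℝ) :
    fourierKernel k (a * t, b * t + c) = fourierKernel k (0, c) := by
  have hkC : (k.1 : ℂ) * a + (k.2 : ℂ) * b = 0 := by exact_mod_cast hk
  simp only [fourierKernel]
  congr 1
  push_cast
  linear_combination (-2 * (Real.pi : ℂ) * I * t) * hkC

lemma geodAvg_mul_fourierKernel (f : ℝ × ℝ → ℂ) {k : ℤ × ℤ} {a b : ℤ}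
    (hk : k.1 * a + k.2 * b = 0) (c : ℝ) :
    geodAvg (f * fourierKernel k) a b c = fourierKernel k (0, c) * geodAvg f a b c := by
  simp only [geodAvg, Pi.mul_apply, fourierKernel_geodesic hk, mul_comm (f _)]
  exact intervalIntegral.integral_const_mul _ _

theorem norm_fc_le_of_norm_geodAvg_le {f : ℝ × ℝ → ℂ} (hf : Periodic2 f) (hc : Continuous f)
    {k : ℤ × ℤ} {a b : ℤ} (ha : a ≠ 0) (hk : k.1 * a + k.2 * b = 0) {M : ℝ}
    (hM : ∀ c, ‖geodAvg f a b c‖ ≤ M) : ‖fc f k‖ ≤ M := by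
  rw [fc_eq_integral_mul_fourierKernel,
    (hf.mul (periodic2_fourierKernel k)).integral_eq_integral_geodAvg
      (hc.mul (continuous_fourierKernel k)) ha b]
  simpa using intervalIntegral.norm_integral_le_of_norm_le_const (a := 0) (b := 1) fun c _ => by
    rw [geodAvg_mul_fourierKernel f hk, norm_mul, norm_fourierKernel, one_mul]
    exact hM c

theorem exists_primitive_orthogonal {k : ℤ × ℤ} (hk : k.2 ≠ 0) :
    ∃ a b : ℤ, Int.gcd a b = 1 ∧ a ≠ 0 ∧ k.1 * a + k.2 * b = 0 ∧
      a ^ 2 + b ^ 2 ≤ k.1 ^ 2 + k.2 ^ 2 := by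
  obtain ⟨g, m, n, hg, hmn, hm, hn⟩ :=
    Int.exists_gcd_one' (m := k.1) (Int.gcd_pos_iff.mpr (Or.inr hk))
  refine ⟨n, -m, by rwa [Int.gcd_neg, Int.gcd_comm], ?_, by rw [hm, hn]; ring, ?_⟩
  · rintro rfl
    exact hk (by rw [hn, zero_mul])
  · have hg2 : (1 : ℤ) ≤ (g : ℤ) ^ 2 := one_le_pow₀ (by exact_mod_cast hg)
    rw [hm, hn]
    nlinarith [mul_le_mul_of_nonneg_left hg2 (sq_nonneg m),
      mul_le_mul_of_nonneg_left hg2 (sq_nonneg n)]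

noncomputable def latticeDisk (N : ℕ) : Finset (ℤ × ℤ) :=
  {k ∈ Icc (-(N : ℤ)) N ×ˢ Icc (-(N : ℤ)) N | k.1 ^ 2 + k.2 ^ 2 ≤ (N : ℤ) ^ 2}

lemma mem_latticeDisk {N : ℕ} {k : ℤ × ℤ} :
    k ∈ latticeDisk N ↔ (k.1 : ℝ) ^ 2 + (k.2 : ℝ) ^ 2 ≤ (N : ℝ) ^ 2 := by
  have hcast : (k.1 : ℝ) ^ 2 + (k.2 : ℝ) ^ 2 ≤ (N : ℝ) ^ 2 ↔ k.1 ^ 2 + k.2 ^ 2 ≤ (N : ℤ) ^ 2 := by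
    exact_mod_cast Iff.rfl
  rw [hcast, latticeDisk, mem_filter, mem_product, mem_Icc, mem_Icc, and_iff_right_iff_imp]
  intro h
  exact ⟨abs_le_of_sq_le_sq' (by nlinarith [sq_nonneg k.2]) (by positivity),
    abs_le_of_sq_le_sq' (by nlinarith [sq_nonneg k.1]) (by positivity)⟩

lemma filter_latticeDisk_snd_eq_zero (N : ℕ) :
    {k ∈ latticeDisk N | k.2 = 0} = Icc (-(N : ℤ)) N ×ˢ {0} := by
  ext ⟨m, n⟩
  simp only [latticeDisk, mem_filter, mem_product, mem_Icc, mem_singleton]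
  constructor
  · rintro ⟨⟨⟨hm, -⟩, -⟩, hn⟩
    exact ⟨hm, hn⟩
  · rintro ⟨hm, rfl⟩
    exact ⟨⟨⟨hm, by omega, by omega⟩, by nlinarith⟩, rfl⟩

lemma card_filter_latticeDisk_snd_ne_zero (N : ℕ) :
    #{k ∈ latticeDisk N | k.2 ≠ 0} ≤ 6 * N ^ 2 := by
  have hsub : {k ∈ latticeDisk N | k.2 ≠ 0} ⊆ Icc (-(N : ℤ)) N ×ˢ (Icc (-(N : ℤ)) N).erase 0 := by
    intro k hk
    simp only [latticeDisk, mem_filter, mem_product] at hk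
    exact mem_product.mpr ⟨hk.1.1.1, mem_erase.mpr ⟨hk.2, hk.1.1.2⟩⟩
  have hIcc : #(Icc (-(N : ℤ)) N) = 2 * N + 1 := by
    rw [Int.card_Icc]; omega
  calc #{k ∈ latticeDisk N | k.2 ≠ 0} ≤ (2 * N + 1) * (2 * N) := by
        simpa [card_product, card_erase_of_mem, hIcc] using card_le_card hsub
    _ ≤ 6 * N ^ 2 := by nlinarith

theorem tsum_disk_sub_tsum_axis (g : ℤ × ℤ → ℝ) (N : ℕ) :
    (∑' k : {k : ℤ × ℤ // (k.1 : ℝ) ^ 2 + (k.2 : ℝ) ^ 2 ≤ (N : ℝ) ^ 2}, g k.val) -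
      ∑' k : {k : ℤ // |k| ≤ (N : ℤ)}, g (k.val, 0) = ∑ k ∈ latticeDisk N with k.2 ≠ 0, g k := by
  have hdisk : ∑' k : {k : ℤ × ℤ // (k.1 : ℝ) ^ 2 + (k.2 : ℝ) ^ 2 ≤ (N : ℝ) ^ 2}, g k.val =
      ∑ k ∈ latticeDisk N, g k :=
    ((Equiv.subtypeEquivRight fun _ => mem_latticeDisk).symm.tsum_eq _).trans
      (Finset.tsum_subtype _ g)
  have haxis : ∑' k : {k : ℤ // |k| ≤ (N : ℤ)}, g (k.val, 0) =
      ∑ k ∈ latticeDisk N with k.2 = 0, g k := by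
    rw [filter_latticeDisk_snd_eq_zero, sum_product, ← Finset.tsum_subtype]
    simp only [sum_singleton]
    exact (Equiv.subtypeEquivRight (p := fun k : ℤ => |k| ≤ (N : ℤ))
      (q := fun k => k ∈ Icc (-(N : ℤ)) N) fun _ => by rw [mem_Icc, abs_le]).tsum_eq
        (fun k => g (k.val, 0))
  rw [hdisk, haxis, ← sum_filter_add_sum_filter_not _ (fun k => k.2 = 0)]
  ring

theorem sum_offAxis_sq_norm_fc_le {f : ℝ × ℝ → ℂ} (hf : Periodic2 f) (hc : Continuous f) (N : ℕ)
    {M : ℝ} (hM0 : 0 ≤ M) (hM : ∀ (a b : ℤ) (c : ℝ), Int.gcd a b = 1 →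
      (a : ℝ) ^ 2 + (b : ℝ) ^ 2 ≤ (N : ℝ) ^ 2 → ‖geodAvg f a b c‖ ^ 2 ≤ M) :
    ∑ k ∈ latticeDisk N with k.2 ≠ 0, ‖fc f k‖ ^ 2 ≤ 6 * (N : ℝ) ^ 2 * M := by
  have hterm : ∀ k ∈ {k ∈ latticeDisk N | k.2 ≠ 0}, ‖fc f k‖ ^ 2 ≤ M := by
    intro k hk
    rw [mem_filter, mem_latticeDisk] at hk
    obtain ⟨a, b, hab, ha, hkab, hle⟩ := exists_primitive_orthogonal hk.2
    have hle' : (a : ℝ) ^ 2 + (b : ℝ) ^ 2 ≤ (N : ℝ) ^ 2 := le_trans (by exact_mod_cast hle) hk.1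
    rw [← Real.le_sqrt (norm_nonneg _) hM0]
    exact norm_fc_le_of_norm_geodAvg_le hf hc ha hkab fun c =>
      (Real.le_sqrt (norm_nonneg _) hM0).mpr (hM a b c hab hle')
  calc ∑ k ∈ latticeDisk N with k.2 ≠ 0, ‖fc f k‖ ^ 2
      ≤ #{k ∈ latticeDisk N | k.2 ≠ 0} * M := by
        rw [← nsmul_eq_mul]; exact sum_le_card_nsmul _ _ _ hterm
    _ ≤ 6 * (N : ℝ) ^ 2 * M := by
        gcongr
        exact_mod_cast card_filter_latticeDisk_snd_ne_zero N

/-- for mean-zero `f` with absolutely convergent Fourier series,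
`∑_{‖k‖≤N} |f̂(k)|² − ∑_{|k₁|≤N} |f̂(k₁,0)|² ≤ C N² max_{|γ| ≤ 2N} |(1/|γ|)∫_γ f|²`. -/
theorem stmt16 :
    ∃ C : ℝ, 0 < C ∧
      ∀ (f : ℝ × ℝ → ℝ), Periodic2 (fun v => (f v : ℂ)) → Continuous f →
        Summable (fun k : ℤ × ℤ => ‖fc (fun v => (f v : ℂ)) k‖) →
        fc (fun v => (f v : ℂ)) (0, 0) = 0 →
        ∀ N : ℕ,
          (∑' k : {k : ℤ × ℤ // (k.1 : ℝ) ^ 2 + (k.2 : ℝ) ^ 2 ≤ (N : ℝ) ^ 2},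
              ‖fc (fun v => (f v : ℂ)) k.val‖ ^ 2) -
            (∑' k : {k : ℤ // |k| ≤ (N : ℤ)}, ‖fc (fun v => (f v : ℂ)) (k.val, 0)‖ ^ 2) ≤
          C * (N : ℝ) ^ 2 *
            sSup {v : ℝ | ∃ (a b : ℤ) (c : ℝ), Int.gcd a b = 1 ∧
              Real.sqrt ((a : ℝ) ^ 2 + (b : ℝ) ^ 2) ≤ 2 * N ∧
              v = ‖geodAvg (fun v => (f v : ℂ)) a b c‖ ^ 2} := by
  refine ⟨6, by norm_num, fun f hf hc _ _ N => ?_⟩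
  have hcC : Continuous fun v => (f v : ℂ) := continuous_ofReal.comp hc
  obtain ⟨B, hB⟩ := hf.exists_norm_le hcC
  refine (tsum_disk_sub_tsum_axis (fun k => ‖fc _ k‖ ^ 2) N).trans_le <|
    sum_offAxis_sq_norm_fc_le hf hcC N
    (Real.sSup_nonneg (by rintro _ ⟨_, _, _, -, -, rfl⟩; positivity))
    fun a b c hab hle => le_csSup ⟨B ^ 2, ?_⟩ ⟨a, b, c, hab, ?_, rfl⟩
  · rintro _ ⟨a, b, c, -, -, rfl⟩
    exact pow_le_pow_left₀ (norm_nonneg _) (norm_geodAvg_le_s16 hB a b c) 2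
  · exact Real.sqrt_le_iff.mpr ⟨by positivity, by nlinarith⟩
end

section
/- Let f ∈ C²(T²) have mean value zero and f ≠ 0. Then the supremum over closed geodesics γ of (1/|γ|)|∫_γ f dH¹| is strictly positive. -/
open MeasureTheory

/-!
If every closed geodesic average of `f` vanished, so would every Fourier coefficient `f̂(k)`.
For `k ≠ 0` pick a primitive vector `(a, b) ⟂ k`. The character `e_k` is constant along the
direction `(a, b)`, so `f̂(k)` is unchanged when `f` is translated by `t (a, b)`; averaging over
`t ∈ [0, 1]` and applying Fubini writes `f̂(k)` as the integral of `e_k` against the averages of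
`f` over the geodesics of direction `(a, b)`, which vanish. Since also `f̂(0) = ∫ f = 0`,
uniqueness of Fourier coefficients on the torus gives `f = 0`.
-/

open intervalIntegral Complex
open scoped Real

lemma AddCircle.eq_zero_of_fourierCoeff_eq_zero {T : ℝ} [Fact (0 < T)] (F : C(AddCircle T, ℂ))
    (h : ∀ n, fourierCoeff F n = 0) : F = 0 := by
  apply ContinuousMap.toLp_injective (p := 2) (μ := AddCircle.haarAddCircle) (𝕜 := ℂ)
  rw [map_zero]
  apply fourierBasis.repr.injective
  ext n
  rw [fourierBasis_repr, fourierCoeff_toLp, h, map_zero]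
  rfl

lemma Function.Periodic.eq_zero_of_integral_mul_exp_eq_zero {g : ℝ → ℂ} {T : ℝ} (hT : 0 < T)
    (hc : Continuous g) (hp : Function.Periodic g T)
    (h : ∀ n : ℤ, ∫ x in (0:ℝ)..T, g x * exp (-2 * π * I * n * x / T) = 0) : g = 0 := by
  have : Fact (0 < T) := ⟨hT⟩
  let F : C(AddCircle T, ℂ) := ⟨hp.lift, continuous_coinduced_dom.mpr hc⟩
  have hF : F = 0 := AddCircle.eq_zero_of_fourierCoeff_eq_zero F fun n => by
    have hcoeff : ∫ x in (0:ℝ)..T, fourier (-n) (x : AddCircle T) • F x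
        = ∫ x in (0:ℝ)..T, g x * exp (-2 * π * I * n * x / T) :=
      integral_congr fun x _ => by
        rw [fourier_coe_apply, smul_eq_mul, mul_comm]
        change g x * _ = _
        push_cast
        ring_nf
    rw [fourierCoeff_eq_intervalIntegral _ n 0, zero_add, hcoeff, h n, smul_zero]
  funext x
  exact congrFun (congrArg DFunLike.coe hF) (x : AddCircle T)

lemma intervalIntegral_integral_swap_of_continuous_s19 {E : Type*} [NormedAddCommGroup E]
    [NormedSpace ℝ E] [CompleteSpace E] {F : ℝ → ℝ → E} (hF : Continuous (Function.uncurry F))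
    {a b c d : ℝ} (hab : a ≤ b) (hcd : c ≤ d) :
    ∫ x in a..b, ∫ y in c..d, F x y = ∫ y in c..d, ∫ x in a..b, F x y := by
  simp_rw [integral_of_le hab, integral_of_le hcd]
  refine MeasureTheory.integral_integral_swap ?_
  rw [Measure.prod_restrict]
  exact (hF.continuousOn.integrableOn_compact (isCompact_Icc.prod isCompact_Icc)).mono_set
    (Set.prod_mono Set.Ioc_subset_Icc_self Set.Ioc_subset_Icc_self)

lemma Int.exists_gcd_eq_one_and_dotProduct_eq_zero {k : ℤ × ℤ} (hk : k ≠ 0) :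
    ∃ a b : ℤ, Int.gcd a b = 1 ∧ k.1 * a + k.2 * b = 0 := by
  have hpos : 0 < Int.gcd k.2 k.1 :=
    Int.gcd_pos_iff.mpr (by by_contra! h; exact hk (Prod.ext h.2 h.1))
  set d : ℤ := (Int.gcd k.2 k.1 : ℤ)
  refine ⟨k.2 / d, -(k.1 / d), ?_, ?_⟩
  · rw [Int.gcd_neg]
    exact Int.gcd_div_gcd_div_gcd hpos
  · have : k.1 * (k.2 / d) = k.2 * (k.1 / d) := by
      rw [← Int.mul_ediv_assoc _ (Int.gcd_dvd_left _ _), ← Int.mul_ediv_assoc _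
        (Int.gcd_dvd_right _ _), mul_comm]
    rw [this]
    ring

noncomputable def torusChar (k : ℤ × ℤ) (v : ℝ × ℝ) : ℂ :=
  exp (-2 * (π : ℂ) * I * ((k.1 : ℂ) * v.1 + (k.2 : ℂ) * v.2))

lemma fc_eq_integral_mul_torusChar (g : ℝ × ℝ → ℂ) (k : ℤ × ℤ) :
    fc g k = ∫ x in (0:ℝ)..1, ∫ y in (0:ℝ)..1, g (x, y) * torusChar k (x, y) :=
  rfl

@[fun_prop]
lemma continuous_torusChar (k : ℤ × ℤ) : Continuous (torusChar k) := by
  unfold torusChar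
  fun_prop

lemma torusChar_eq_exp_mul_exp (k : ℤ × ℤ) (x y : ℝ) :
    torusChar k (x, y) = exp (-2 * π * I * k.1 * x) * exp (-2 * π * I * k.2 * y) := by
  rw [torusChar, ← exp_add]
  congr 1
  push_cast
  ring

lemma periodic2_torusChar (k : ℤ × ℤ) : Periodic2 (torusChar k) := by
  intro x y
  constructor
  · exact exp_eq_exp_iff_exists_int.2 ⟨-k.1, by push_cast; ring⟩
  · exact exp_eq_exp_iff_exists_int.2 ⟨-k.2, by push_cast; ring⟩

lemma torusChar_add_smul_of_dotProduct_eq_zero {k : ℤ × ℤ} {a b : ℤ} (h : k.1 * a + k.2 * b = 0)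
    (x y t : ℝ) : torusChar k (x + a * t, y + b * t) = torusChar k (x, y) := by
  have h' : (k.1 : ℂ) * a + k.2 * b = 0 := by exact_mod_cast h
  rw [torusChar, torusChar]
  congr 1
  push_cast
  linear_combination (-2 * (π : ℂ) * I * t) * h'

lemma Periodic2.mul_s19 {g h : ℝ × ℝ → ℂ} (hg : Periodic2 g) (hh : Periodic2 h) :
    Periodic2 (g * h) := fun x y =>
  ⟨by simp only [Pi.mul_apply, (hg x y).1, (hh x y).1],
    by simp only [Pi.mul_apply, (hg x y).2, (hh x y).2]⟩

lemma Periodic2.integral_comp_add {g : ℝ × ℝ → ℂ} (hg : Periodic2 g) (s u : ℝ) :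
    ∫ x in (0:ℝ)..1, ∫ y in (0:ℝ)..1, g (x + s, y + u)
      = ∫ x in (0:ℝ)..1, ∫ y in (0:ℝ)..1, g (x, y) := by
  have hcomp_add {h : ℝ → ℂ} (hp : Function.Periodic h 1) (s : ℝ) :
      ∫ x in (0:ℝ)..1, h (x + s) = ∫ x in (0:ℝ)..1, h x := by
    simpa [integral_comp_add_right, add_comm] using hp.intervalIntegral_add_eq s 0
  have hrow (x : ℝ) : Function.Periodic (fun y => g (x, y)) 1 := fun y => (hg x y).2
  have hcol : Function.Periodic (fun x => ∫ y in (0:ℝ)..1, g (x, y)) 1 := fun x => by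
    simp only [(hg x _).1]
  simp_rw [hcomp_add (hrow _) u]
  exact hcomp_add hcol s

lemma fc_eq_zero_of_geodAvgP_eq_zero {g : ℝ × ℝ → ℂ} (hg : Continuous g) (hper : Periodic2 g)
    (hz : ∀ (a b : ℤ) (p : ℝ × ℝ), Int.gcd a b = 1 → geodAvgP g a b p = 0)
    {k : ℤ × ℤ} (hk : k ≠ 0) : fc g k = 0 := by
  obtain ⟨a, b, hab, hperp⟩ := Int.exists_gcd_eq_one_and_dotProduct_eq_zero hk
  set G : ℝ → ℝ → ℝ → ℂ := fun t x y => g (x + a * t, y + b * t) * torusChar k (x, y)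
  -- `e_k` is constant along direction `(a, b)`, so each `G t` is a translate of `g e_k`.
  have htranslate (t : ℝ) : ∫ x in (0:ℝ)..1, ∫ y in (0:ℝ)..1, G t x y = fc g k := by
    have := (hper.mul_s19 (periodic2_torusChar k)).integral_comp_add (a * t) (b * t)
    simp only [Pi.mul_apply, torusChar_add_smul_of_dotProduct_eq_zero hperp] at this
    rw [fc_eq_integral_mul_torusChar]
    exact this
  have hG : Continuous fun q : ℝ × ℝ × ℝ => G q.1 q.2.1 q.2.2 := by
    simp only [G]
    fun_prop
  have hcont_tx : Continuous (Function.uncurry fun t x => ∫ y in (0:ℝ)..1, G t x y) :=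
    continuous_parametric_intervalIntegral_of_continuous'
      (f := fun (p : ℝ × ℝ) (y : ℝ) => G p.1 p.2 y)
      (hG.comp (by fun_prop : Continuous fun q : (ℝ × ℝ) × ℝ => (q.1.1, q.1.2, q.2))) 0 1
  have hcont_ty (x : ℝ) : Continuous (Function.uncurry fun t y => G t x y) :=
    hG.comp (by fun_prop : Continuous fun q : ℝ × ℝ => (q.1, x, q.2))
  have hline (x y : ℝ) : ∫ t in (0:ℝ)..1, g (x + a * t, y + b * t) = 0 := hz a b (x, y) hab
  calc fc g k = ∫ t in (0:ℝ)..1, ∫ x in (0:ℝ)..1, ∫ y in (0:ℝ)..1, G t x y := by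
        simp [htranslate]
    _ = ∫ x in (0:ℝ)..1, ∫ y in (0:ℝ)..1, ∫ t in (0:ℝ)..1, G t x y := by
        rw [intervalIntegral_integral_swap_of_continuous_s19 hcont_tx zero_le_one zero_le_one]
        exact integral_congr fun x _ =>
          intervalIntegral_integral_swap_of_continuous_s19 (hcont_ty x) zero_le_one zero_le_one
    _ = 0 := by
        simp [G, intervalIntegral.integral_mul_const, hline]

lemma fc_zero (g : ℝ × ℝ → ℂ) : fc g 0 = ∫ x in (0:ℝ)..1, ∫ y in (0:ℝ)..1, g (x, y) := by
  simp [fc]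

lemma eq_zero_of_fc_eq_zero {g : ℝ × ℝ → ℂ} (hg : Continuous g) (hper : Periodic2 g)
    (h : ∀ k, fc g k = 0) : g = 0 := by
  have hrow (k₁ : ℤ) :
      (fun y => ∫ x in (0:ℝ)..1, g (x, y) * exp (-2 * π * I * k₁ * x)) = 0 := by
    refine Function.Periodic.eq_zero_of_integral_mul_exp_eq_zero one_pos
      (continuous_parametric_intervalIntegral_of_continuous' (by fun_prop) 0 1)
      (fun y => by simp only [(hper _ y).2]) fun k₂ => ?_
    calc _ = ∫ y in (0:ℝ)..1, ∫ x in (0:ℝ)..1, g (x, y) * torusChar (k₁, k₂) (x, y) := by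
          refine integral_congr fun y _ => ?_
          simp only [← intervalIntegral.integral_mul_const, torusChar_eq_exp_mul_exp, mul_assoc,
            ofReal_one, div_one]
      _ = fc g (k₁, k₂) :=
          (intervalIntegral_integral_swap_of_continuous_s19 (by fun_prop) zero_le_one zero_le_one).symm
      _ = 0 := h _
  funext ⟨x, y⟩
  refine congrFun (Function.Periodic.eq_zero_of_integral_mul_exp_eq_zero (g := fun x => g (x, y))
    one_pos (by fun_prop) (fun x => (hper x y).1) fun k₁ => ?_) x
  simpa using congrFun (hrow k₁) y

lemma eq_zero_of_geodAvgP_eq_zero {g : ℝ × ℝ → ℂ} (hg : Continuous g) (hper : Periodic2 g)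
    (hmean : ∫ x in (0:ℝ)..1, ∫ y in (0:ℝ)..1, g (x, y) = 0)
    (hz : ∀ (a b : ℤ) (p : ℝ × ℝ), Int.gcd a b = 1 → geodAvgP g a b p = 0) : g = 0 :=
  eq_zero_of_fc_eq_zero hg hper fun k => by
    rcases eq_or_ne k 0 with rfl | hk
    · rw [fc_zero, hmean]
    · exact fc_eq_zero_of_geodAvgP_eq_zero hg hper hz hk

lemma Periodic2.exists_norm_le_s19 {g : ℝ × ℝ → ℂ} (hg : Continuous g) (hper : Periodic2 g) :
    ∃ M, ∀ v, ‖g v‖ ≤ M := by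
  obtain ⟨M, hM⟩ := (isCompact_Icc.prod isCompact_Icc).exists_bound_of_continuousOn
    (s := Set.Icc (0:ℝ) 1 ×ˢ Set.Icc (0:ℝ) 1) hg.continuousOn
  refine ⟨M, fun ⟨x, y⟩ => ?_⟩
  obtain ⟨x', hx', hx⟩ :=
    Function.Periodic.exists_mem_Ico₀ (f := fun x => g (x, y)) (fun x => (hper x y).1) one_pos x
  obtain ⟨y', hy', hy⟩ :=
    Function.Periodic.exists_mem_Ico₀ (f := fun y => g (x', y)) (fun y => (hper x' y).2) one_pos y
  rw [hx, hy]
  exact hM _ ⟨Set.Ico_subset_Icc_self hx', Set.Ico_subset_Icc_self hy'⟩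

lemma bddAbove_geodVals {g : ℝ × ℝ → ℂ} (hg : Continuous g) (hper : Periodic2 g) :
    BddAbove (geodVals g) := by
  obtain ⟨M, hM⟩ := hper.exists_norm_le_s19 hg
  refine ⟨M, ?_⟩
  rintro _ ⟨a, b, p, -, rfl⟩
  simpa [geodAvgP] using norm_integral_le_of_norm_le_const (a := 0) (b := 1) fun t _ => hM _

/-- for real `f ∈ C²(T²)` with mean zero and `f` not identically zero, the
supremum over closed geodesics of `(1/|γ|)|∫_γ f dH¹|` is strictly positive. -/
theorem stmt19 (f : ℝ × ℝ → ℝ) (hper : Periodic2 (fun v => (f v : ℂ)))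
    (hf : ContDiff ℝ 2 f)
    (hmean : (∫ x in (0:ℝ)..1, ∫ y in (0:ℝ)..1, f (x, y)) = 0)
    (hne : ∃ v, f v ≠ 0) :
    0 < sSup (geodVals (fun v => (f v : ℂ))) := by
  have hg : Continuous fun v => (f v : ℂ) := continuous_ofReal.comp hf.continuous
  obtain ⟨a, b, p, hab, hgeod⟩ : ∃ (a b : ℤ) (p : ℝ × ℝ), Int.gcd a b = 1 ∧
      geodAvgP (fun v => (f v : ℂ)) a b p ≠ 0 := by
    by_contra! hz
    have hmeanC : ∫ x in (0:ℝ)..1, ∫ y in (0:ℝ)..1, (f (x, y) : ℂ) = 0 := by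
      simp_rw [integral_ofReal, hmean, ofReal_zero]
    obtain ⟨v, hv⟩ := hne
    exact hv (ofReal_eq_zero.1 (congrFun (eq_zero_of_geodAvgP_eq_zero hg hper hmeanC hz) v))
  exact (norm_pos_iff.2 hgeod).trans_le
    (le_csSup (bddAbove_geodVals hg hper) ⟨a, b, p, hab, rfl⟩)
end
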